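/- arXiv:1106.5115 — 8 statements merged into one kernel-verified Lean document; each statement's English description precedes it below -/
import Mathlib

section
/- Let ⋆ be an F-bilinear map on S satisfying n(x⋆y) = λ n(x) n(y) for all x,y ∈ S, where λ ∈ F^×. Then ⋆ satisfies b_n(x⋆y, z) = b_n(x, y⋆z) for all x,y,z ∈ S if and only if x⋆(y⋆x) = λ n(x) y = (x⋆y)⋆x for all x,y ∈ S. -/
/-!
Polarizing `n (x ⋆ y) = λ n(x) n(y)` gives `bₙ(x ⋆ u, x ⋆ v) = λ n(x) bₙ(u, v)` and
`bₙ(u ⋆ x, v ⋆ x) = λ n(x) bₙ(u, v)`. If `bₙ` is associative, then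
`bₙ(x ⋆ (y ⋆ x), z) = bₙ(z ⋆ x, y ⋆ x) = λ n(x) bₙ(y, z)` and
`bₙ((x ⋆ y) ⋆ x, z) = bₙ(x ⋆ y, x ⋆ z) = λ n(x) bₙ(y, z)`, so nondegeneracy gives both identities.

Conversely, fix `x, z` and let `f(y) = bₙ(x ⋆ y, z) - bₙ(x, y ⋆ z)`, a linear form. Pairing
`y ⋆ (x ⋆ y) = λ n(y) x` with `y ⋆ z` gives `λ n(y) f(y) = 0`, so the cubic form `n(y) f(y)`
vanishes. Its full polarization reads
`bₙ(a, b) f(c) + bₙ(a, c) f(b) + bₙ(b, c) f(a) = 0`; if `f(a) ≠ 0`, a nonzero `b` with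
`f(b) = 0 = bₙ(a, b)` exists as soon as `dim S ≥ 3`, and then `bₙ(b, ·) = 0`, contradicting
nondegeneracy. Hence `f = 0`.
-/

open Module LinearMap

namespace QuadraticMap

variable {F S : Type*} [Field F] [AddCommGroup S] [Module F S]

theorem polar_map_map_of_forall_map_eq_mul {n : QuadraticForm F S} {φ : S →ₗ[F] S} {c : F}
    (h : ∀ x, n (φ x) = c * n x) (u v : S) : polar n (φ u) (φ v) = c * polar n u v := by
  simp only [polar, ← map_add, h]
  ring

theorem polar_mul_add_polar_mul_add_polar_mul_eq_zero (n : QuadraticForm F S) (f : S →ₗ[F] F)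
    (h : ∀ y, n y * f y = 0) (a b c : S) :
    polar n a b * f c + polar n a c * f b + polar n b c * f a = 0 := by
  have habc := n.map_add_add_add_map a b c
  have habc' := h (a + b + c)
  have hab := h (a + b)
  have hbc := h (b + c)
  have hca := h (c + a)
  simp only [map_add] at habc' hab hbc hca
  simp only [polar, add_comm a c]
  linear_combination habc' - hab - hbc - hca + h a + h b + h c - (f a + f b + f c) * habc

theorem eq_of_forall_polar_eq {n : QuadraticForm F S} (hnd : (polarBilin n).SeparatingLeft)
    {a b : S} (h : ∀ z, polar n a z = polar n b z) : a = b :=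
  sub_eq_zero.1 <| hnd _ fun z => by simp [h]

theorem exists_ne_zero_apply_eq_zero_apply_eq_zero [FiniteDimensional F S]
    (hdim : 2 < finrank F S) (f g : S →ₗ[F] F) : ∃ u ≠ 0, f u = 0 ∧ g u = 0 := by
  have hker : ker (f.prod g) ≠ ⊥ :=
    ker_ne_bot_of_finrank_lt (by rwa [finrank_prod, finrank_self])
  obtain ⟨u, hu, hu0⟩ := Submodule.exists_mem_ne_zero_of_ne_bot hker
  rw [mem_ker, LinearMap.prod_apply, Prod.mk_eq_zero] at hu
  exact ⟨u, hu0, hu⟩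

theorem eq_zero_of_forall_mul_apply_eq_zero [FiniteDimensional F S] (hdim : 2 < finrank F S)
    {n : QuadraticForm F S} (hnd : (polarBilin n).SeparatingLeft) {f : S →ₗ[F] F}
    (h : ∀ y, n y * f y = 0) : f = 0 := by
  ext a
  by_contra hfa
  obtain ⟨b, hb0, hfb, hab⟩ := exists_ne_zero_apply_eq_zero_apply_eq_zero hdim f (polarBilin n a)
  refine hb0 (hnd b fun c => ?_)
  have hpolar := polar_mul_add_polar_mul_add_polar_mul_eq_zero n f h a b c
  rw [polarBilin_apply_apply] at hab
  rw [hab, hfb, zero_mul, mul_zero, zero_add, zero_add] at hpolar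
  exact (mul_eq_zero.1 hpolar).resolve_right hfa

section Composition

variable {n : QuadraticForm F S} {star : S →ₗ[F] S →ₗ[F] S} {lam : F}
  (hmul : ∀ x y, n (star x y) = lam * n x * n y)
include hmul

theorem polar_star_star_left (a u v : S) :
    polar n (star a u) (star a v) = lam * n a * polar n u v :=
  polar_map_map_of_forall_map_eq_mul (hmul a) u v

theorem polar_star_star_right (a u v : S) :
    polar n (star u a) (star v a) = lam * n a * polar n u v :=
  polar_map_map_of_forall_map_eq_mul (φ := star.flip a)
    (fun x => by rw [flip_apply, hmul, mul_right_comm]) u v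

variable (hnd : (polarBilin n).SeparatingLeft)
include hnd

theorem polar_assoc_of_star_star_left_eq [FiniteDimensional F S] (hdim : 2 < finrank F S)
    (hlam : lam ≠ 0) (hflex : ∀ x y, star x (star y x) = (lam * n x) • y) (x y z : S) :
    polar n (star x y) z = polar n x (star y z) := by
  let f : S →ₗ[F] F := (polarBilin n).flip z ∘ₗ star x - polarBilin n x ∘ₗ star.flip z
  have hf : ∀ w, f w = polar n (star x w) z - polar n x (star w z) := fun w => rfl
  have hcubic : ∀ w, n w * f w = 0 := fun w => by
    have hpair := polar_star_star_left hmul w (star x w) z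
    rw [hflex, polar_smul_left, smul_eq_mul] at hpair
    have : lam * (n w * f w) = 0 := by rw [hf]; linear_combination -hpair
    exact (mul_eq_zero.1 this).resolve_left hlam
  exact sub_eq_zero.1 <| (hf y).symm.trans <|
    LinearMap.congr_fun (eq_zero_of_forall_mul_apply_eq_zero hdim hnd hcubic) y

variable (hassoc : ∀ x y z, polar n (star x y) z = polar n x (star y z))
include hassoc

theorem star_star_left_eq_of_polar_assoc (x y : S) : star x (star y x) = (lam * n x) • y :=
  eq_of_forall_polar_eq hnd fun z => by
    rw [polar_comm, ← hassoc, polar_star_star_right hmul, polar_smul_left, polar_comm,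
      smul_eq_mul]

theorem star_star_right_eq_of_polar_assoc (x y : S) : star (star x y) x = (lam * n x) • y :=
  eq_of_forall_polar_eq hnd fun z => by
    rw [hassoc, polar_star_star_left hmul, polar_smul_left, smul_eq_mul]

end Composition

end QuadraticMap

/-- For a bilinear map `⋆` on an 8-dimensional quadratic space `(S, n)` with
nondegenerate polar form, satisfying `n (x ⋆ y) = λ * n x * n y`, the associativity condition
`bₙ(x⋆y, z) = bₙ(x, y⋆z)` holds for all `x y z` iff
`x⋆(y⋆x) = λ n(x) • y = (x⋆y)⋆x` for all `x y`. -/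
theorem statement0 (F : Type*) [Field F] (S : Type*) [AddCommGroup S] [Module F S]
    [FiniteDimensional F S] (hdim : Module.finrank F S = 8)
    (n : QuadraticForm F S)
    (hnd : ∀ x : S, (∀ y : S, QuadraticMap.polar n x y = 0) → x = 0)
    (star : S →ₗ[F] S →ₗ[F] S) (lam : F) (hlam : lam ≠ 0)
    (hmul : ∀ x y : S, n (star x y) = lam * n x * n y) :
    (∀ x y z : S,
        QuadraticMap.polar n (star x y) z = QuadraticMap.polar n x (star y z)) ↔
    (∀ x y : S, star x (star y x) = (lam * n x) • y ∧
        star (star x y) x = (lam * n x) • y) :=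
  ⟨fun hassoc x y => ⟨QuadraticMap.star_star_left_eq_of_polar_assoc hmul hnd hassoc x y,
      QuadraticMap.star_star_right_eq_of_polar_assoc hmul hnd hassoc x y⟩,
    fun hflex => QuadraticMap.polar_assoc_of_star_star_left_eq hmul hnd (by omega) hlam
      fun x y => (hflex x y).1⟩
end

section
/- Suppose there exists u ∈ S with n(u) = 1. Then: (1) the product x⋄y := λ_⋆^{−2} · u⋆((x⋆u)⋆(y⋆u)) is a normalized symmetric composition on (S,n), and the map λ_⋆^{−1} r_u is a similarity of (S,n) satisfying λ_⋆^{−1} r_u(x⋄y) = (λ_⋆^{−1} r_u(x)) ⋆ (λ_⋆^{−1} r_u(y)) for all x,y ∈ S; (2) if ⋄ and ⋄' are normalized symmetric compositions on (S,n) and there are similarities g, g' of (S,n) with g(x⋄y) = g(x)⋆g(y) and g'(x⋄'y) = g'(x)⋆g'(y) for all x,y, then there is an isometry h of (S,n) with h(x⋄y) = h(x)⋄'h(y) for all x,y ∈ S. -/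
/-!
Polarizing `n (x ⋆ y) = λ n(x) n(y)` and using associativity of the polar form together with
nondegeneracy gives `(x ⋆ y) ⋆ x = x ⋆ (y ⋆ x) = λ n(x) y`. For `n(u) = 1` this says that
`ℓ_u r_u = r_u ℓ_u = λ`, so `f = λ⁻¹ r_u` is a bijective similarity with multiplier `λ⁻¹`, and
`x ⋄ y` is exactly `f⁻¹ (f x ⋆ f y)`. Pulling `⋆` back along a similarity with multiplier `μ`
multiplies the multiplier by `μ`, so `⋄` is normalized.

Conversely, evaluating `n` at `g (u ⋄ u) = g u ⋆ g u` shows that every similarity from a normalized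
composition to `⋆` has multiplier `λ⁻¹`; hence `g'⁻¹ g` is an isometry, and it intertwines `⋄`
and `⋄'`.
-/

open QuadraticMap

section

variable {F S : Type*} [Field F] [AddCommGroup S] [Module F S] {n : QuadraticForm F S}

/-- Bilinearity is not part of this notion: lemmas that need it are stated for `fun x y => star x y`
with `star` a bilinear map. -/
structure IsSymmetricComposition (n : QuadraticForm F S) (m : S → S → S) (lam : F) : Prop where
  map_mul : ∀ x y, n (m x y) = lam * n x * n y
  polar_assoc : ∀ x y z, polar n (m x y) z = polar n x (m y z)

theorem polar_map_of_similarity {f : S →ₗ[F] S} {μ : F} (hf : ∀ x, n (f x) = μ * n x)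
    (x y : S) : polar n (f x) (f y) = μ * polar n x y := by
  unfold polar
  rw [← map_add, hf, hf, hf]
  ring

theorem multiplier_mul_eq_one_of_similarity {d m : S → S → S} {lam μ : F} {u : S}
    (hd : ∀ x y, n (d x y) = n x * n y) (hm : ∀ x y, n (m x y) = lam * n x * n y)
    {f : S →ₗ[F] S} (hμ : μ ≠ 0) (hf : ∀ x, n (f x) = μ * n x)
    (hfd : ∀ x y, f (d x y) = m (f x) (f y)) (hu : n u ≠ 0) : lam * μ = 1 := by
  have h := congrArg n (hfd u u)
  rw [hf, hd, hm, hf] at h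
  have hnu : μ * n u * n u ≠ 0 := by positivity
  exact (mul_left_cancel₀ hnu (by linear_combination h)).symm

namespace IsSymmetricComposition

theorem of_similarity {m d : S → S → S} {lam μ : F} (h : IsSymmetricComposition n m lam)
    {f : S →ₗ[F] S} (hμ : μ ≠ 0) (hf : ∀ x, n (f x) = μ * n x)
    (hfd : ∀ x y, f (d x y) = m (f x) (f y)) : IsSymmetricComposition n d (lam * μ) where
  map_mul x y := by
    have hxy := congrArg n (hfd x y)
    rw [hf, h.map_mul, hf, hf] at hxy
    exact mul_left_cancel₀ hμ (by linear_combination hxy)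
  polar_assoc x y z := by
    have hxyz := h.polar_assoc (f x) (f y) (f z)
    rw [← hfd, ← hfd, polar_map_of_similarity hf, polar_map_of_similarity hf] at hxyz
    exact mul_left_cancel₀ hμ hxyz

variable {star : S →ₗ[F] S →ₗ[F] S} {lam : F}

theorem polar_left (h : IsSymmetricComposition n (fun x y => star x y) lam) (x y z : S) :
    polar n (star x y) (star x z) = lam * n x * polar n y z := by
  unfold polar
  rw [← map_add, h.map_mul, h.map_mul, h.map_mul]
  ring

theorem polar_right (h : IsSymmetricComposition n (fun x y => star x y) lam) (x y z : S) :
    polar n (star x z) (star y z) = lam * n z * polar n x y := by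
  unfold polar
  rw [← LinearMap.add_apply, ← map_add, h.map_mul, h.map_mul, h.map_mul]
  ring

theorem mul_mul_self (hnd : ∀ x : S, (∀ y : S, polar n x y = 0) → x = 0)
    (h : IsSymmetricComposition n (fun x y => star x y) lam) (x y : S) :
    star (star x y) x = (lam * n x) • y := by
  refine sub_eq_zero.mp (hnd _ fun z => ?_)
  rw [polar_sub_left, polar_smul_left, h.polar_assoc, h.polar_left, smul_eq_mul, sub_self]

theorem self_mul_mul (hnd : ∀ x : S, (∀ y : S, polar n x y = 0) → x = 0)
    (h : IsSymmetricComposition n (fun x y => star x y) lam) (x y : S) :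
    star x (star y x) = (lam * n x) • y := by
  refine sub_eq_zero.mp (hnd _ fun z => ?_)
  rw [polar_sub_left, polar_smul_left, polar_comm, ← h.polar_assoc, h.polar_right, polar_comm,
    smul_eq_mul, sub_self]

end IsSymmetricComposition

section Normalization

variable {star : S →ₗ[F] S →ₗ[F] S} {lam : F} {u : S}

variable (star lam u) in
def normalizedMul (x y : S) : S :=
  (lam ^ 2)⁻¹ • star u (star (star x u) (star y u))

theorem map_smul_mul_right (hmul : ∀ x y, n (star x y) = lam * n x * n y) (hu : n u = 1)
    (x : S) : n (lam⁻¹ • star x u) = lam⁻¹ * n x := by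
  rw [QuadraticMap.map_smul, hmul, hu, smul_eq_mul]
  by_cases hlam : lam = 0
  · simp [hlam]
  · field_simp

namespace IsSymmetricComposition

theorem smul_mul_right_normalizedMul (hnd : ∀ x : S, (∀ y : S, polar n x y = 0) → x = 0)
    (h : IsSymmetricComposition n (fun x y => star x y) lam) (hu : n u = 1) (x y : S) :
    lam⁻¹ • star (normalizedMul star lam u x y) u = star (lam⁻¹ • star x u) (lam⁻¹ • star y u) := by
  rw [normalizedMul, LinearMap.map_smul₂, h.mul_mul_self hnd, hu, mul_one, map_smul,
    LinearMap.map_smul₂, smul_smul, smul_smul, smul_smul]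
  congr 1
  by_cases hlam : lam = 0
  · simp [hlam]
  · field_simp

theorem bijective_smul_mul_right (hnd : ∀ x : S, (∀ y : S, polar n x y = 0) → x = 0)
    (h : IsSymmetricComposition n (fun x y => star x y) lam) (hlam : lam ≠ 0) (hu : n u = 1) :
    Function.Bijective (fun x => lam⁻¹ • star x u) := by
  refine Function.bijective_iff_has_inverse.mpr ⟨star u, fun x => ?_, fun x => ?_⟩
  · simp only [map_smul, h.self_mul_mul hnd, hu, mul_one, smul_smul, inv_mul_cancel₀ hlam,
      one_smul]
  · simp only [h.mul_mul_self hnd, hu, mul_one, smul_smul, inv_mul_cancel₀ hlam, one_smul]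

theorem normalizedMul_isSymmetricComposition
    (hnd : ∀ x : S, (∀ y : S, polar n x y = 0) → x = 0)
    (h : IsSymmetricComposition n (fun x y => star x y) lam) (hlam : lam ≠ 0) (hu : n u = 1) :
    IsSymmetricComposition n (normalizedMul star lam u) 1 := by
  have hsim := h.of_similarity (f := lam⁻¹ • star.flip u) (inv_ne_zero hlam)
    (map_smul_mul_right h.map_mul hu) (h.smul_mul_right_normalizedMul hnd hu)
  rwa [mul_inv_cancel₀ hlam] at hsim

end IsSymmetricComposition

end Normalization

theorem exists_isometry_of_similar {d d' m : S → S → S} {lam : F} {u : S}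
    (hd : ∀ x y, n (d x y) = n x * n y) (hd' : ∀ x y, n (d' x y) = n x * n y)
    (hm : ∀ x y, n (m x y) = lam * n x * n y) (hu : n u ≠ 0) (g g' : S ≃ₗ[F] S)
    (hg : ∃ μ : F, μ ≠ 0 ∧ ∀ x, n (g x) = μ * n x)
    (hg' : ∃ μ' : F, μ' ≠ 0 ∧ ∀ x, n (g' x) = μ' * n x)
    (hgd : ∀ x y, g (d x y) = m (g x) (g y)) (hgd' : ∀ x y, g' (d' x y) = m (g' x) (g' y)) :
    ∃ h : S ≃ₗ[F] S, (∀ x, n (h x) = n x) ∧ ∀ x y, h (d x y) = d' (h x) (h y) := by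
  obtain ⟨μ, hμ, hgμ⟩ := hg
  obtain ⟨μ', hμ', hgμ'⟩ := hg'
  have hμμ' : μ = μ' := by
    rw [← inv_eq_of_mul_eq_one_right
        (multiplier_mul_eq_one_of_similarity hd hm (f := g.toLinearMap) hμ hgμ hgd hu),
      ← inv_eq_of_mul_eq_one_right
        (multiplier_mul_eq_one_of_similarity hd' hm (f := g'.toLinearMap) hμ' hgμ' hgd' hu)]
  refine ⟨g.trans g'.symm, fun x => mul_left_cancel₀ hμ' ?_, fun x y => g'.injective ?_⟩
  · simp only [LinearEquiv.trans_apply, ← hgμ', LinearEquiv.apply_symm_apply, hgμ, hμμ']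
  · simp only [LinearEquiv.trans_apply, LinearEquiv.apply_symm_apply, hgd, hgd']

end

theorem statement1_general (F : Type*) [Field F] (S : Type*) [AddCommGroup S] [Module F S]
    (n : QuadraticForm F S)
    (hnd : ∀ x : S, (∀ y : S, QuadraticMap.polar n x y = 0) → x = 0)
    (star : S →ₗ[F] S →ₗ[F] S) (lam : F) (hlam : lam ≠ 0)
    (hmul : ∀ x y : S, n (star x y) = lam * n x * n y)
    (hassoc : ∀ x y z : S,
        QuadraticMap.polar n (star x y) z = QuadraticMap.polar n x (star y z))
    (u : S) (hu : n u = 1) :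
    -- (1) `x ⋄ y := λ⁻² • (u ⋆ ((x ⋆ u) ⋆ (y ⋆ u)))` is a normalized symmetric composition,
    ((∀ x y : S,
        n ((lam ^ 2)⁻¹ • star u (star (star x u) (star y u))) = n x * n y) ∧
      (∀ x y z : S,
        QuadraticMap.polar n ((lam ^ 2)⁻¹ • star u (star (star x u) (star y u))) z =
          QuadraticMap.polar n x ((lam ^ 2)⁻¹ • star u (star (star y u) (star z u)))) ∧
      -- and `λ⁻¹ • r_u` is a similarity `⋄ → ⋆`:
      Function.Bijective (fun x : S => lam⁻¹ • star x u) ∧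
      (∃ μ : F, μ ≠ 0 ∧ ∀ x : S, n (lam⁻¹ • star x u) = μ * n x) ∧
      (∀ x y : S,
        lam⁻¹ • star ((lam ^ 2)⁻¹ • star u (star (star x u) (star y u))) u =
          star (lam⁻¹ • star x u) (lam⁻¹ • star y u))) ∧
    -- (2) two normalized symmetric compositions similar to `⋆` are isomorphic:
    (∀ d d' : S →ₗ[F] S →ₗ[F] S,
      (∀ x y : S, n (d x y) = n x * n y) →
      (∀ x y z : S,
        QuadraticMap.polar n (d x y) z = QuadraticMap.polar n x (d y z)) →
      (∀ x y : S, n (d' x y) = n x * n y) →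
      (∀ x y z : S,
        QuadraticMap.polar n (d' x y) z = QuadraticMap.polar n x (d' y z)) →
      ∀ g g' : S ≃ₗ[F] S,
        (∃ μ : F, μ ≠ 0 ∧ ∀ x : S, n (g x) = μ * n x) →
        (∃ μ' : F, μ' ≠ 0 ∧ ∀ x : S, n (g' x) = μ' * n x) →
        (∀ x y : S, g (d x y) = star (g x) (g y)) →
        (∀ x y : S, g' (d' x y) = star (g' x) (g' y)) →
        ∃ h : S ≃ₗ[F] S, (∀ x : S, n (h x) = n x) ∧
          ∀ x y : S, h (d x y) = d' (h x) (h y)) := by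
  have hstar : IsSymmetricComposition n (fun x y => star x y) lam := ⟨hmul, hassoc⟩
  have hdiamond := hstar.normalizedMul_isSymmetricComposition hnd hlam hu
  refine ⟨⟨fun x y => by rw [← one_mul (n x)]; exact hdiamond.map_mul x y, hdiamond.polar_assoc, hstar.bijective_smul_mul_right hnd hlam hu,
    ⟨lam⁻¹, inv_ne_zero hlam, map_smul_mul_right hmul hu⟩,
    hstar.smul_mul_right_normalizedMul hnd hu⟩, ?_⟩
  intro d d' hd _ hd' _ g g' hg hg' hgd hgd'
  exact exists_isometry_of_similar (m := fun x y => star x y) hd hd' hmul (hu ▸ one_ne_zero)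
    g g' hg hg' hgd hgd'

/-- Every symmetric composition on `(S,n)` (with `n` representing `1`) is similar
to a normalized one, unique up to isomorphism. -/
theorem statement1 (F : Type*) [Field F] (S : Type*) [AddCommGroup S] [Module F S]
    [FiniteDimensional F S] (hdim : Module.finrank F S = 8)
    (n : QuadraticForm F S)
    (hnd : ∀ x : S, (∀ y : S, QuadraticMap.polar n x y = 0) → x = 0)
    (star : S →ₗ[F] S →ₗ[F] S) (lam : F) (hlam : lam ≠ 0)
    (hmul : ∀ x y : S, n (star x y) = lam * n x * n y)
    (hassoc : ∀ x y z : S,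
        QuadraticMap.polar n (star x y) z = QuadraticMap.polar n x (star y z))
    (u : S) (hu : n u = 1) :
    -- (1) `x ⋄ y := λ⁻² • (u ⋆ ((x ⋆ u) ⋆ (y ⋆ u)))` is a normalized symmetric composition,
    ((∀ x y : S,
        n ((lam ^ 2)⁻¹ • star u (star (star x u) (star y u))) = n x * n y) ∧
      (∀ x y z : S,
        QuadraticMap.polar n ((lam ^ 2)⁻¹ • star u (star (star x u) (star y u))) z =
          QuadraticMap.polar n x ((lam ^ 2)⁻¹ • star u (star (star y u) (star z u)))) ∧
      -- and `λ⁻¹ • r_u` is a similarity `⋄ → ⋆`: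
      Function.Bijective (fun x : S => lam⁻¹ • star x u) ∧
      (∃ μ : F, μ ≠ 0 ∧ ∀ x : S, n (lam⁻¹ • star x u) = μ * n x) ∧
      (∀ x y : S,
        lam⁻¹ • star ((lam ^ 2)⁻¹ • star u (star (star x u) (star y u))) u =
          star (lam⁻¹ • star x u) (lam⁻¹ • star y u))) ∧
    -- (2) two normalized symmetric compositions similar to `⋆` are isomorphic:
    (∀ d d' : S →ₗ[F] S →ₗ[F] S,
      (∀ x y : S, n (d x y) = n x * n y) →
      (∀ x y z : S,
        QuadraticMap.polar n (d x y) z = QuadraticMap.polar n x (d y z)) →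
      (∀ x y : S, n (d' x y) = n x * n y) →
      (∀ x y z : S,
        QuadraticMap.polar n (d' x y) z = QuadraticMap.polar n x (d' y z)) →
      ∀ g g' : S ≃ₗ[F] S,
        (∃ μ : F, μ ≠ 0 ∧ ∀ x : S, n (g x) = μ * n x) →
        (∃ μ' : F, μ' ≠ 0 ∧ ∀ x : S, n (g' x) = μ' * n x) →
        (∀ x y : S, g (d x y) = star (g x) (g y)) →
        (∀ x y : S, g' (d' x y) = star (g' x) (g' y)) →
        ∃ h : S ≃ₗ[F] S, (∀ x : S, n (h x) = n x) ∧
          ∀ x y : S, h (d x y) = d' (h x) (h y)) :=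
  statement1_general F S n hnd star lam hlam hmul hassoc u hu
end

section
/- Let N be the quadratic form on S ⊕ S given by N(u,v) = n(u) + n(v), with polar form b_N. For every element c of the even Clifford subalgebra C_0(S,n) and all w, w' ∈ S ⊕ S, one has b_N(α_⋆(c)(w), w') = b_N(w, α_⋆(σ(c))(w')), where σ is the canonical involution (reversal) of C(S,n), i.e., the unique anti-automorphism fixing every x ∈ S. -/
/-!
The operators `α_⋆(x)` for `x ∈ S` are not self-adjoint for `b_N`, but each one is adjoint to
itself from `b_N` to the twisted form `b_{N'}`, `N'(u,v) = λ n(u) + λ⁻¹ n(v)`, and back; this is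
the associativity `b_n(x ⋆ y, z) = b_n(x, y ⋆ z)` of the symmetric composition. A product
`x₁ x₂ ⋯ x₂ₖ` of even length therefore passes `b_N → b_{N'} → b_N → ⋯ → b_N`, and its adjoint
is the reversed product, i.e. `α_⋆` of its reverse.
-/

open CliffordAlgebra LinearMap QuadraticMap

section AdjointPair

variable {R V W N : Type*} [CommRing R] [AddCommGroup V] [Module R V] [AddCommGroup W]
  [Module R W] [AddCommGroup N] [Module R N]

theorem LinearMap.IsAdjointPair.swap_polarBilin {Q₁ : QuadraticMap R V N}
    {Q₂ : QuadraticMap R W N} {f : V → W} {g : W → V}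
    (h : IsAdjointPair Q₁.polarBilin Q₂.polarBilin f g) :
    IsAdjointPair Q₂.polarBilin Q₁.polarBilin g f := fun x y =>
  (polar_comm _ _ _).trans <| (h y x).symm.trans (polar_comm _ _ _)

end AdjointPair

section Clifford

variable {R M V : Type*} [CommRing R] [AddCommGroup M] [Module R M] [AddCommGroup V] [Module R V]
  {Q : QuadraticForm R M}

theorem isAdjointPair_reverse_of_mem_even {B C : LinearMap.BilinForm R V}
    (A : CliffordAlgebra Q →ₐ[R] Module.End R V)
    (hBC : ∀ m, IsAdjointPair B C (A (ι Q m)) (A (ι Q m)))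
    (hCB : ∀ m, IsAdjointPair C B (A (ι Q m)) (A (ι Q m))) :
    ∀ c ∈ even Q, IsAdjointPair B B (A c) (A (reverse c)) := by
  intro c hc
  induction c, hc using even_induction with
  | algebraMap r =>
    rw [reverse.commutes, AlgHom.commutes, Algebra.algebraMap_eq_smul_one]
    exact isAdjointPair_one.smul r
  | add x y _ _ hx hy =>
    rw [map_add, map_add, map_add]
    exact hx.add hy
  | ι_mul_ι_mul m₁ m₂ x _ hx =>
    rw [reverse.map_mul, reverse.map_mul, reverse_ι, reverse_ι]
    simp only [map_mul, Module.End.coe_mul]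
    exact (hx.comp (hBC m₂)).comp (hCB m₁)

end Clifford

section SymmetricComposition

variable {F S : Type*} [Field F] [AddCommGroup S] [Module F S]

def compositionOp (star : S →ₗ[F] S →ₗ[F] S) (lam : F) (x : S) : Module.End F (S × S) :=
  (lam⁻¹ • star.flip x ∘ₗ snd F S S).prod (star x ∘ₗ fst F S S)

theorem compositionOp_apply (star : S →ₗ[F] S →ₗ[F] S) (lam : F) (x : S) (w : S × S) :
    compositionOp star lam x w = (lam⁻¹ • star w.2 x, star x w.1) :=
  rfl

variable {n : QuadraticForm F S} {star : S →ₗ[F] S →ₗ[F] S} {lam : F}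

theorem isAdjointPair_compositionOp (hlam : lam ≠ 0)
    (hassoc : ∀ x y z : S, polar n (star x y) z = polar n x (star y z)) (x : S) :
    IsAdjointPair (n.prod n).polarBilin ((lam • n).prod (lam⁻¹ • n)).polarBilin
      (compositionOp star lam x) (compositionOp star lam x) := fun a b => by
  have hcyclic : polar n x (star a.1 b.2) = polar n a.1 (star b.2 x) := by
    rw [polar_comm, hassoc]
  simp only [polarBilin_apply_apply, polar_prod, compositionOp_apply, FunLike.coe_smul,
    polar_smul, polar_smul_left, polar_smul_right, hassoc, hcyclic, smul_eq_mul]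
  field_simp
  ring

end SymmetricComposition

theorem statement3_general (F : Type*) [Field F] (S : Type*) [AddCommGroup S] [Module F S]
    (n : QuadraticForm F S)
    (star : S →ₗ[F] S →ₗ[F] S) (lam : F) (hlam : lam ≠ 0)
    (hassoc : ∀ x y z : S,
        QuadraticMap.polar n (star x y) z = QuadraticMap.polar n x (star y z))
    (α : CliffordAlgebra n →ₐ[F] Module.End F (S × S))
    (hα : ∀ (x : S) (w : S × S),
        α (CliffordAlgebra.ι n x) w = (lam⁻¹ • star w.2 x, star x w.1)) :
    ∀ c ∈ CliffordAlgebra.even n, ∀ w w' : S × S,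
      QuadraticMap.polar (fun z : S × S => n z.1 + n z.2) (α c w) w' =
        QuadraticMap.polar (fun z : S × S => n z.1 + n z.2) w
          (α (CliffordAlgebra.reverse c) w') := by
  have hαι : ∀ x, α (ι n x) = compositionOp star lam x := fun x =>
    LinearMap.ext (hα x)
  have hadj := isAdjointPair_compositionOp (n := n) hlam hassoc
  -- `N` is `n.prod n` definitionally, so the goal is an `IsAdjointPair` statement for `b_N`.
  exact isAdjointPair_reverse_of_mem_even α
    (fun x => hαι x ▸ hadj x) (fun x => hαι x ▸ (hadj x).swap_polarBilin)

/-- For `N(u,v) = n(u) + n(v)` on `S ⊕ S`, the isomorphism `α_⋆` intertwines the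
canonical involution (reversal) `σ` of `C_0(S,n)` with the adjoint involution of `b_N`:
`b_N(α_⋆(c) w, w') = b_N(w, α_⋆(σ c) w')` for all `c ∈ C_0(S,n)` and `w, w' ∈ S ⊕ S`. -/
theorem statement3 (F : Type*) [Field F] (S : Type*) [AddCommGroup S] [Module F S]
    [FiniteDimensional F S] (hdim : Module.finrank F S = 8)
    (n : QuadraticForm F S)
    (hnd : ∀ x : S, (∀ y : S, QuadraticMap.polar n x y = 0) → x = 0)
    (star : S →ₗ[F] S →ₗ[F] S) (lam : F) (hlam : lam ≠ 0)
    (hmul : ∀ x y : S, n (star x y) = lam * n x * n y)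
    (hassoc : ∀ x y z : S,
        QuadraticMap.polar n (star x y) z = QuadraticMap.polar n x (star y z))
    (α : CliffordAlgebra n →ₐ[F] Module.End F (S × S))
    (hα : ∀ (x : S) (w : S × S),
        α (CliffordAlgebra.ι n x) w = (lam⁻¹ • star w.2 x, star x w.1)) :
    ∀ c ∈ CliffordAlgebra.even n, ∀ w w' : S × S,
      QuadraticMap.polar (fun z : S × S => n z.1 + n z.2) (α c w) w' =
        QuadraticMap.polar (fun z : S × S => n z.1 + n z.2) w
          (α (CliffordAlgebra.reverse c) w') :=
  statement3_general F S n star lam hlam hassoc α hα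
end

section
/- Let f, g, h be similarities of (S,n) and λ ∈ F^× such that λ f(x⋆y) = g(x)⋆h(y) for all x,y ∈ S. Then λ^{−1}μ(h) · g(x⋆y) = h(x)⋆f(y) for all x,y ∈ S, and λ^{−1}μ(g) · h(x⋆y) = f(x)⋆g(y) for all x,y ∈ S, and λ² μ(f) = μ(g) μ(h). -/
/-!
Comparing norms of `λ f(e⋆e) = g(e)⋆h(e)` at an anisotropic vector `e` gives `λ² μ(f) = μ(g) μ(h)`.
Since `b_n(x⋆y, z) = b_n(y, z⋆x)`, pairing `h(x)⋆f(y)` with `g(w)` and using the relation once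
gives `λ μ(f) b_n(x⋆y, w)`, while pairing `c g(x⋆y)` with `g(w)` gives `c μ(g) b_n(x⋆y, w)`;
nondegeneracy and surjectivity of `g` turn this into a cyclic shift of the relation.
A second shift gives the remaining identity.
-/

open QuadraticMap

section SymmetricComposition

variable {R M : Type*} [CommRing R] [AddCommGroup M] [Module R M] {n : QuadraticForm R M}

theorem polar_map_map_of_forall_map_eq_mul {f : M →ₗ[R] M} {μ : R}
    (hf : ∀ x, n (f x) = μ * n x) (x y : M) : polar n (f x) (f y) = μ * polar n x y := by
  simp only [polar, ← map_add, hf]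
  ring

theorem exists_ne_zero_of_polar_nondegenerate [Nontrivial M]
    (hnd : ∀ x : M, (∀ y : M, polar n x y = 0) → x = 0) : ∃ e : M, n e ≠ 0 := by
  by_contra! hzero
  obtain ⟨x, hx⟩ := exists_ne (0 : M)
  exact hx (hnd x fun y => by simp [polar, hzero])

theorem eq_of_forall_polar_map_eq (hnd : ∀ x : M, (∀ y : M, polar n x y = 0) → x = 0)
    {g : M →ₗ[R] M} (hg : Function.Surjective g) {a b : M}
    (hab : ∀ w, polar n a (g w) = polar n b (g w)) : a = b := by
  refine sub_eq_zero.mp (hnd _ fun z => ?_)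
  obtain ⟨w, rfl⟩ := hg z
  rw [polar_sub_left, hab, sub_self]

theorem polar_star_left_eq_polar_star_right (star : M →ₗ[R] M →ₗ[R] M)
    (hassoc : ∀ x y z, polar n (star x y) z = polar n x (star y z)) (x y z : M) :
    polar n (star x y) z = polar n y (star z x) := by
  rw [hassoc, polar_comm n, hassoc]

theorem sq_mul_eq_mul_of_smul_map_star [IsDomain R] {star : M →ₗ[R] M →ₗ[R] M} {lam : R}
    (hlam : lam ≠ 0) (hmul : ∀ x y, n (star x y) = lam * n x * n y) {e : M} (he : n e ≠ 0)
    {f g h : M → M} {μf μg μh : R} (hf : ∀ x, n (f x) = μf * n x)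
    (hg : ∀ x, n (g x) = μg * n x) (hh : ∀ x, n (h x) = μh * n x) {l : R}
    (hrel : ∀ x y, l • f (star x y) = star (g x) (h y)) : l ^ 2 * μf = μg * μh := by
  have hnorm := congrArg n (hrel e e)
  rw [QuadraticMap.map_smul, hf, hmul, hmul, hg, hh, smul_eq_mul] at hnorm
  refine mul_right_cancel₀ (mul_ne_zero hlam (mul_ne_zero he he)) ?_
  linear_combination hnorm

theorem smul_map_star_eq_star_of_smul_map_star {star : M →ₗ[R] M →ₗ[R] M}
    (hnd : ∀ x : M, (∀ y : M, polar n x y = 0) → x = 0)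
    (hassoc : ∀ x y z, polar n (star x y) z = polar n x (star y z))
    {f g h : M →ₗ[R] M} {μf μg : R} (hf : ∀ x, n (f x) = μf * n x)
    (hg : ∀ x, n (g x) = μg * n x) (hg_surj : Function.Surjective g) {l c : R}
    (hrel : ∀ x y, l • f (star x y) = star (g x) (h y)) (hc : c * μg = l * μf) (x y : M) :
    c • g (star x y) = star (h x) (f y) := by
  refine eq_of_forall_polar_map_eq hnd hg_surj fun w => ?_
  have hcyc := polar_star_left_eq_polar_star_right star hassoc
  calc polar n (c • g (star x y)) (g w)
      = c * μg * polar n (star x y) w := by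
        rw [polar_smul_left, polar_map_map_of_forall_map_eq_mul hg, smul_eq_mul, mul_assoc]
    _ = l * μf * polar n y (star w x) := by rw [hc, hcyc]
    _ = polar n (f y) (l • f (star w x)) := by
        rw [polar_smul_right, polar_map_map_of_forall_map_eq_mul hf, smul_eq_mul]
        ring
    _ = polar n (star (h x) (f y)) (g w) := by rw [hrel, hcyc]

end SymmetricComposition

theorem statement4_general (F : Type*) [Field F] (S : Type*) [AddCommGroup S] [Module F S]
    (hdim : Module.finrank F S = 8)
    (n : QuadraticForm F S)
    (hnd : ∀ x : S, (∀ y : S, QuadraticMap.polar n x y = 0) → x = 0)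
    (star : S →ₗ[F] S →ₗ[F] S) (lam : F) (hlam : lam ≠ 0)
    (hmul : ∀ x y : S, n (star x y) = lam * n x * n y)
    (hassoc : ∀ x y z : S,
        QuadraticMap.polar n (star x y) z = QuadraticMap.polar n x (star y z))
    (f g h : S ≃ₗ[F] S) (μf μg μh : F)
    (hf : ∀ x : S, n (f x) = μf * n x)
    (hg : ∀ x : S, n (g x) = μg * n x)
    (hh : ∀ x : S, n (h x) = μh * n x)
    (l : F) (hl : l ≠ 0)
    (hrel : ∀ x y : S, l • f (star x y) = star (g x) (h y)) :
    (∀ x y : S, (l⁻¹ * μh) • g (star x y) = star (h x) (f y)) ∧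
    (∀ x y : S, (l⁻¹ * μg) • h (star x y) = star (f x) (g y)) ∧
    l ^ 2 * μf = μg * μh := by
  have : Nontrivial S := Module.nontrivial_of_finrank_eq_succ hdim
  obtain ⟨e, he⟩ := exists_ne_zero_of_polar_nondegenerate hnd
  have hμ : l ^ 2 * μf = μg * μh := sq_mul_eq_mul_of_smul_map_star hlam hmul he hf hg hh hrel
  have hshift₁ : ∀ x y, (l⁻¹ * μh) • g (star x y) = star (h x) (f y) :=
    smul_map_star_eq_star_of_smul_map_star hnd hassoc hf hg g.surjective hrel
      (by field_simp; linear_combination -hμ)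
  have hshift₂ : ∀ x y, (l⁻¹ * μg) • h (star x y) = star (f x) (g y) :=
    smul_map_star_eq_star_of_smul_map_star hnd hassoc hg hh h.surjective hshift₁
      (by ring)
  exact ⟨hshift₁, hshift₂, hμ⟩

/-- If `λ f(x⋆y) = g(x)⋆h(y)` for similarities `f, g, h`, then
`λ⁻¹μ(h) g(x⋆y) = h(x)⋆f(y)`, `λ⁻¹μ(g) h(x⋆y) = f(x)⋆g(y)`, and `λ²μ(f) = μ(g)μ(h)`. -/
theorem statement4 (F : Type*) [Field F] (S : Type*) [AddCommGroup S] [Module F S]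
    [FiniteDimensional F S] (hdim : Module.finrank F S = 8)
    (n : QuadraticForm F S)
    (hnd : ∀ x : S, (∀ y : S, QuadraticMap.polar n x y = 0) → x = 0)
    (star : S →ₗ[F] S →ₗ[F] S) (lam : F) (hlam : lam ≠ 0)
    (hmul : ∀ x y : S, n (star x y) = lam * n x * n y)
    (hassoc : ∀ x y z : S,
        QuadraticMap.polar n (star x y) z = QuadraticMap.polar n x (star y z))
    (f g h : S ≃ₗ[F] S) (μf μg μh : F)
    (hμf : μf ≠ 0) (hμg : μg ≠ 0) (hμh : μh ≠ 0)
    (hf : ∀ x : S, n (f x) = μf * n x)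
    (hg : ∀ x : S, n (g x) = μg * n x)
    (hh : ∀ x : S, n (h x) = μh * n x)
    (l : F) (hl : l ≠ 0)
    (hrel : ∀ x y : S, l • f (star x y) = star (g x) (h y)) :
    (∀ x y : S, (l⁻¹ * μh) • g (star x y) = star (h x) (f y)) ∧
    (∀ x y : S, (l⁻¹ * μg) • h (star x y) = star (f x) (g y)) ∧
    l ^ 2 * μf = μg * μh :=
  statement4_general F S hdim n hnd star lam hlam hmul hassoc f g h μf μg μh hf hg hh l hl hrel
end

section
/- Let f, g, h be similarities of (S,n) and λ ∈ F^× such that λ f(x⋆y) = h(y)⋆g(x) for all x,y ∈ S. Then there exist μ, ν ∈ F^× such that μ g(x⋆y) = f(y)⋆h(x) for all x,y ∈ S and ν h(x⋆y) = g(y)⋆f(x) for all x,y ∈ S. -/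
/-!
Write `b` for the polar form of `n`. If `λ f(x⋆y) = h(y)⋆g(x)`, then for every `w`, using the
associativity `b(x⋆y, z) = b(x, y⋆z)`, the symmetry of `b` and the multipliers of the similarities,
`b(λ μ_f / μ_g · g(x⋆y), g w) = λ μ_f b(y, w⋆x) = b(f y, λ f(w⋆x)) = b(f(y)⋆h(x), g w)`.
As `g` is onto and `b` is nondegenerate, `(f, g, h)` may be rotated to `(g, h, f)`; rotating once
more gives the second identity.
-/

open QuadraticMap

def IsRelatedTriple {R M : Type*} [CommSemiring R] [AddCommMonoid M] [Module R M]
    (star : M →ₗ[R] M →ₗ[R] M) (l : R) (f g h : M → M) : Prop :=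
  ∀ x y : M, l • f (star x y) = star (h y) (g x)

section

variable {R M : Type*} [CommRing R] [AddCommGroup M] [Module R M] {Q : QuadraticForm R M}

theorem polar_map_of_similarity_s5 {E : Type*} [FunLike E M M] [AddMonoidHomClass E M M] {e : E}
    {μ : R} (he : ∀ x, Q (e x) = μ * Q x) (x y : M) : polar Q (e x) (e y) = μ * polar Q x y := by
  simp only [polar, ← map_add, he]
  ring

theorem eq_of_forall_polar_eq (hnd : ∀ x : M, (∀ y : M, polar Q x y = 0) → x = 0) {u v : M}
    (huv : ∀ w : M, polar Q u w = polar Q v w) : u = v :=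
  sub_eq_zero.mp <| hnd _ fun w => by rw [polar_sub_left, huv, sub_self]

theorem IsRelatedTriple.rotate {E : Type*} [FunLike E M M] [AddMonoidHomClass E M M]
    (hnd : ∀ x : M, (∀ y : M, polar Q x y = 0) → x = 0) {star : M →ₗ[R] M →ₗ[R] M}
    (hassoc : ∀ x y z : M, polar Q (star x y) z = polar Q x (star y z))
    {f : E} {g : M ≃ₗ[R] M} {h : M → M} {l c μf μg : R}
    (hf : ∀ x, Q (f x) = μf * Q x) (hg : ∀ x, Q (g x) = μg * Q x) (hc : c * μg = l * μf)
    (hrel : IsRelatedTriple star l f g h) : IsRelatedTriple star c g h f := by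
  intro x y
  refine eq_of_forall_polar_eq hnd fun z => ?_
  obtain ⟨w, rfl⟩ := g.surjective z
  calc polar Q (c • g (star x y)) (g w)
      = c * μg * polar Q x (star y w) := by
        rw [polar_smul_left, smul_eq_mul, polar_map_of_similarity_s5 hg, hassoc, mul_assoc]
    _ = l * (μf * polar Q y (star w x)) := by rw [polar_comm, hassoc, hc, mul_assoc]
    _ = polar Q (f y) (l • f (star w x)) := by
        rw [polar_smul_right, smul_eq_mul, polar_map_of_similarity_s5 hf]
    _ = polar Q (star (f y) (h x)) (g w) := by rw [hrel, hassoc]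

end

theorem statement5_general (F : Type*) [Field F] (S : Type*) [AddCommGroup S] [Module F S]
    (n : QuadraticForm F S)
    (hnd : ∀ x : S, (∀ y : S, QuadraticMap.polar n x y = 0) → x = 0)
    (star : S →ₗ[F] S →ₗ[F] S)
    (hassoc : ∀ x y z : S,
        QuadraticMap.polar n (star x y) z = QuadraticMap.polar n x (star y z))
    (f g h : S ≃ₗ[F] S) (μf μg μh : F)
    (hμf : μf ≠ 0) (hμg : μg ≠ 0) (hμh : μh ≠ 0)
    (hf : ∀ x : S, n (f x) = μf * n x)
    (hg : ∀ x : S, n (g x) = μg * n x)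
    (hh : ∀ x : S, n (h x) = μh * n x)
    (l : F) (hl : l ≠ 0)
    (hrel : ∀ x y : S, l • f (star x y) = star (h y) (g x)) :
    ∃ μ ν : F, μ ≠ 0 ∧ ν ≠ 0 ∧
      (∀ x y : S, μ • g (star x y) = star (f y) (h x)) ∧
      (∀ x y : S, ν • h (star x y) = star (g y) (f x)) := by
  have hgrel : IsRelatedTriple star (l * μf / μg) g h f :=
    IsRelatedTriple.rotate hnd hassoc hf hg (by field_simp) hrel
  have hhrel : IsRelatedTriple star (l * μf / μh) h f g :=
    IsRelatedTriple.rotate hnd hassoc hg hh (by field_simp) hgrel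
  exact ⟨_, _, by positivity, by positivity, hgrel, hhrel⟩

/-- If `λ f(x⋆y) = h(y)⋆g(x)` for similarities `f, g, h`, then there exist
`μ, ν ∈ F^×` with `μ g(x⋆y) = f(y)⋆h(x)` and `ν h(x⋆y) = g(y)⋆f(x)` for all `x, y`. -/
theorem statement5 (F : Type*) [Field F] (S : Type*) [AddCommGroup S] [Module F S]
    [FiniteDimensional F S] (hdim : Module.finrank F S = 8)
    (n : QuadraticForm F S)
    (hnd : ∀ x : S, (∀ y : S, QuadraticMap.polar n x y = 0) → x = 0)
    (star : S →ₗ[F] S →ₗ[F] S) (lam : F) (hlam : lam ≠ 0)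
    (hmul : ∀ x y : S, n (star x y) = lam * n x * n y)
    (hassoc : ∀ x y z : S,
        QuadraticMap.polar n (star x y) z = QuadraticMap.polar n x (star y z))
    (f g h : S ≃ₗ[F] S) (μf μg μh : F)
    (hμf : μf ≠ 0) (hμg : μg ≠ 0) (hμh : μh ≠ 0)
    (hf : ∀ x : S, n (f x) = μf * n x)
    (hg : ∀ x : S, n (g x) = μg * n x)
    (hh : ∀ x : S, n (h x) = μh * n x)
    (l : F) (hl : l ≠ 0)
    (hrel : ∀ x y : S, l • f (star x y) = star (h y) (g x)) :
    ∃ μ ν : F, μ ≠ 0 ∧ ν ≠ 0 ∧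
      (∀ x y : S, μ • g (star x y) = star (f y) (h x)) ∧
      (∀ x y : S, ν • h (star x y) = star (g y) (f x)) :=
  statement5_general F S n hnd star hassoc f g h μf μg μh hμf hμg hμh hf hg hh l hl hrel
end

section
/- Let f, g be similarities of (S,n). The bilinear map ⋄ defined by x⋄y = f(x)⋆g(y) is a symmetric composition on (S,n) if and only if f(x)⋆g(y) = μ(g) · g^{−1}(x⋆f(y)) for all x,y ∈ S. When these conditions hold, the multiplier of ⋄ is λ_⋄ = μ(f) μ(g) λ_⋆. -/
/-! The similarity `g` moves across the polar form at the cost of its multiplier: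
`b(u, g z) = μ(g) b(g⁻¹ u, z)`. Hence, using the associativity of `⋆`,
`b(f x ⋆ g y, z) - b(x, f y ⋆ g z) = b(f x ⋆ g y - μ(g) g⁻¹(x ⋆ f y), z)`, so `⋄` is associative
with respect to `b` exactly when the identity holds, by nondegeneracy. Under the identity,
`n(f x ⋆ g y) = μ(g)² n(g⁻¹(x ⋆ f y)) = μ(g) n(x ⋆ f y) = μ(f) μ(g) λ n(x) n(y)`. -/

namespace QuadraticMap

variable {R M : Type*} [CommRing R] [AddCommGroup M] [Module R M] {Q : QuadraticForm R M}

section Similarity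

variable {g : M ≃ₗ[R] M} {μ : R}

theorem polar_map_map_of_similarity (hg : ∀ x, Q (g x) = μ * Q x) (a b : M) :
    polar Q (g a) (g b) = μ * polar Q a b := by
  simp only [polar, ← map_add, hg]
  ring

theorem polar_map_right_of_similarity (hg : ∀ x, Q (g x) = μ * Q x) (u z : M) :
    polar Q u (g z) = μ * polar Q (g.symm u) z := by
  simpa using polar_map_map_of_similarity hg (g.symm u) z

theorem map_smul_symm_of_similarity (hg : ∀ x, Q (g x) = μ * Q x) (u : M) :
    Q (μ • g.symm u) = μ * Q u := by
  have hu : Q u = μ * Q (g.symm u) := by simpa using hg (g.symm u)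
  rw [QuadraticMap.map_smul, smul_eq_mul, hu]
  ring

end Similarity

variable {star : M →ₗ[R] M →ₗ[R] M} {f g : M ≃ₗ[R] M} {μg : R}

theorem map_star_similarity_of_twist {lam μf : R} (hmul : ∀ x y, Q (star x y) = lam * Q x * Q y)
    (hf : ∀ x, Q (f x) = μf * Q x) (hg : ∀ x, Q (g x) = μg * Q x)
    (htwist : ∀ x y, star (f x) (g y) = μg • g.symm (star x (f y))) (x y : M) :
    Q (star (f x) (g y)) = (μf * μg * lam) * Q x * Q y := by
  rw [htwist, map_smul_symm_of_similarity hg, hmul, hf]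
  ring

theorem polar_star_similarity_sub_twist
    (hassoc : ∀ x y z, polar Q (star x y) z = polar Q x (star y z))
    (hg : ∀ x, Q (g x) = μg * Q x) (x y z : M) :
    polar Q (star (f x) (g y) - μg • g.symm (star x (f y))) z =
      polar Q (star (f x) (g y)) z - polar Q x (star (f y) (g z)) := by
  rw [polar_sub_left, polar_smul_left, smul_eq_mul, ← hassoc x,
    polar_map_right_of_similarity hg]

theorem twist_of_polar_star_similarity (hnd : ∀ x, (∀ y, polar Q x y = 0) → x = 0)
    (hassoc : ∀ x y z, polar Q (star x y) z = polar Q x (star y z))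
    (hg : ∀ x, Q (g x) = μg * Q x)
    (hassoc' : ∀ x y z, polar Q (star (f x) (g y)) z = polar Q x (star (f y) (g z)))
    (x y : M) : star (f x) (g y) = μg • g.symm (star x (f y)) :=
  sub_eq_zero.mp <| hnd _ fun z => by
    rw [polar_star_similarity_sub_twist hassoc hg, hassoc', sub_self]

theorem polar_star_similarity_of_twist
    (hassoc : ∀ x y z, polar Q (star x y) z = polar Q x (star y z))
    (hg : ∀ x, Q (g x) = μg * Q x)
    (htwist : ∀ x y, star (f x) (g y) = μg • g.symm (star x (f y))) (x y z : M) :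
    polar Q (star (f x) (g y)) z = polar Q x (star (f y) (g z)) := by
  rw [← sub_eq_zero, ← polar_star_similarity_sub_twist hassoc hg, htwist, sub_self,
    polar_zero_left]

end QuadraticMap

open QuadraticMap in
theorem statement11_general (F : Type*) [Field F] (S : Type*) [AddCommGroup S] [Module F S]
    (n : QuadraticForm F S)
    (hnd : ∀ x : S, (∀ y : S, QuadraticMap.polar n x y = 0) → x = 0)
    (star : S →ₗ[F] S →ₗ[F] S) (lam : F) (hlam : lam ≠ 0)
    (hmul : ∀ x y : S, n (star x y) = lam * n x * n y)
    (hassoc : ∀ x y z : S,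
        QuadraticMap.polar n (star x y) z = QuadraticMap.polar n x (star y z))
    (f g : S ≃ₗ[F] S) (μf μg : F) (hμf : μf ≠ 0) (hμg : μg ≠ 0)
    (hf : ∀ x : S, n (f x) = μf * n x)
    (hg : ∀ x : S, n (g x) = μg * n x) :
    ((∃ lamd : F, lamd ≠ 0 ∧
        ∀ x y : S, n (star (f x) (g y)) = lamd * n x * n y) ∧
      (∀ x y z : S,
        QuadraticMap.polar n (star (f x) (g y)) z =
          QuadraticMap.polar n x (star (f y) (g z))) ↔
      (∀ x y : S, star (f x) (g y) = μg • g.symm (star x (f y)))) ∧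
    ((∀ x y : S, star (f x) (g y) = μg • g.symm (star x (f y))) →
      ∀ x y : S, n (star (f x) (g y)) = (μf * μg * lam) * n x * n y) := by
  have hmult := map_star_similarity_of_twist hmul hf hg
  refine ⟨⟨fun ⟨_, hassoc'⟩ => twist_of_polar_star_similarity hnd hassoc hg hassoc',
    fun htwist => ⟨?_, polar_star_similarity_of_twist hassoc hg htwist⟩⟩, hmult⟩
  exact ⟨μf * μg * lam, mul_ne_zero (mul_ne_zero hμf hμg) hlam, hmult htwist⟩

/-- For similarities `f, g`, the map `x⋄y = f(x)⋆g(y)` is a symmetric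
composition on `(S,n)` iff `f(x)⋆g(y) = μ(g) • g⁻¹(x⋆f(y))` for all `x, y`; in that case
the multiplier of `⋄` is `μ(f)μ(g)λ_⋆`. -/
theorem statement11 (F : Type*) [Field F] (S : Type*) [AddCommGroup S] [Module F S]
    [FiniteDimensional F S] (hdim : Module.finrank F S = 8)
    (n : QuadraticForm F S)
    (hnd : ∀ x : S, (∀ y : S, QuadraticMap.polar n x y = 0) → x = 0)
    (star : S →ₗ[F] S →ₗ[F] S) (lam : F) (hlam : lam ≠ 0)
    (hmul : ∀ x y : S, n (star x y) = lam * n x * n y)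
    (hassoc : ∀ x y z : S,
        QuadraticMap.polar n (star x y) z = QuadraticMap.polar n x (star y z))
    (f g : S ≃ₗ[F] S) (μf μg : F) (hμf : μf ≠ 0) (hμg : μg ≠ 0)
    (hf : ∀ x : S, n (f x) = μf * n x)
    (hg : ∀ x : S, n (g x) = μg * n x) :
    ((∃ lamd : F, lamd ≠ 0 ∧
        ∀ x y : S, n (star (f x) (g y)) = lamd * n x * n y) ∧
      (∀ x y z : S,
        QuadraticMap.polar n (star (f x) (g y)) z =
          QuadraticMap.polar n x (star (f y) (g z))) ↔
      (∀ x y : S, star (f x) (g y) = μg • g.symm (star x (f y)))) ∧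
    ((∀ x y : S, star (f x) (g y) = μg • g.symm (star x (f y))) →
      ∀ x y : S, n (star (f x) (g y)) = (μf * μg * lam) * n x * n y) :=
  statement11_general F S n hnd star lam hlam hmul hassoc f g μf μg hμf hμg hf hg
end

section
/- On the Zorn vector space 𝔷 = F × F³ × F³ × F, the para-Zorn product ∗, defined by (α,a,b,β) ∗ (γ,c,d,δ) = (βδ + a∙d, −βc − γa − b×d, −δb − αd + a×c, αγ + b∙c), is a normalized symmetric composition for the quadratic form n(α,a,b,β) = αβ − a∙b (in particular b_n is nondegenerate). Moreover the linear map π(α,a,b,β) = (α, p(a), p(b), β), where p(x₁,x₂,x₃) = (x₃,x₁,x₂), is an isometry of (𝔷,n) satisfying π(ξ ∗ η) = π(ξ) ∗ π(η) for all ξ,η ∈ 𝔷 and π³ = Id. -/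
/-- The standard dot product on `F³`. -/
def dot3 {F : Type*} [Field F] (a b : Fin 3 → F) : F :=
  a 0 * b 0 + a 1 * b 1 + a 2 * b 2

/-- The cross product on `F³`. -/
def cross3 {F : Type*} [Field F] (a b : Fin 3 → F) : Fin 3 → F :=
  ![a 1 * b 2 - a 2 * b 1, a 2 * b 0 - a 0 * b 2, a 0 * b 1 - a 1 * b 0]

/-- The Zorn vector space `𝔷 = F × F³ × F³ × F`. -/
abbrev ZornSpace (F : Type*) [Field F] : Type _ :=
  F × (Fin 3 → F) × (Fin 3 → F) × F

/-- The Zorn norm `n(α, a, b, β) = αβ − a∙b`. -/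
def zornN {F : Type*} [Field F] (ξ : ZornSpace F) : F :=
  ξ.1 * ξ.2.2.2 - dot3 ξ.2.1 ξ.2.2.1

/-- The para-Zorn product
`(α,a,b,β) ∗ (γ,c,d,δ) = (βδ + a∙d, −βc − γa − b×d, −δb − αd + a×c, αγ + b∙c)`. -/
def paraZornMul {F : Type*} [Field F] (ξ η : ZornSpace F) : ZornSpace F :=
  (ξ.2.2.2 * η.2.2.2 + dot3 ξ.2.1 η.2.2.1,
   -(ξ.2.2.2 • η.2.1) - η.1 • ξ.2.1 - cross3 ξ.2.2.1 η.2.2.1,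
   -(η.2.2.2 • ξ.2.2.1) - ξ.1 • η.2.2.1 + cross3 ξ.2.1 η.2.1,
   ξ.1 * η.1 + dot3 ξ.2.2.1 η.2.1)

/-- The cyclic permutation `p(x₁,x₂,x₃) = (x₃,x₁,x₂)` of coordinates of `F³`. -/
def perm3 {F : Type*} [Field F] (a : Fin 3 → F) : Fin 3 → F :=
  ![a 2, a 0, a 1]

/-- The map `π(α,a,b,β) = (α, p(a), p(b), β)`. -/
def zornPi {F : Type*} [Field F] (ξ : ZornSpace F) : ZornSpace F :=
  (ξ.1, perm3 ξ.2.1, perm3 ξ.2.2.1, ξ.2.2.2)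

/-! Write `ξ = (α, a, b, β)`, `η = (γ, c, d, δ)`. Expanding `n(ξ ∗ η)`, the terms involving
`a ⨯₃ c` or `b ⨯₃ d` against one of its own factors vanish, and the Binet–Cauchy identity turns
`(b ⨯₃ d) ∙ (a ⨯₃ c)` into `(a∙b)(c∙d) − (a∙d)(b∙c)`; what is left factors as
`(αβ − a∙b)(γδ − c∙d)`. Invariance of `b_n` reduces to the cyclic symmetry of the triple product
`u ∙ (v ⨯₃ w)`, and nondegeneracy to that of the dot product. The cyclic permutation `p` is a
rotation, so it preserves `∙` and `⨯₃`; hence `π` preserves `n` and `∗`, and `π³ = Id` as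
`p³ = id`. -/

section ParaZorn

open Matrix

variable {F : Type*} [Field F]

lemma dot3_eq_dotProduct (a b : Fin 3 → F) : dot3 a b = a ⬝ᵥ b := by
  simp [dot3, dotProduct, Fin.sum_univ_three]

lemma cross3_eq_crossProduct (a b : Fin 3 → F) : cross3 a b = a ⨯₃ b := rfl

lemma zornN_mk (α β : F) (a b : Fin 3 → F) : zornN (α, a, b, β) = α * β - a ⬝ᵥ b := by
  rw [zornN, dot3_eq_dotProduct]

lemma polar_zornN_mk (α β γ δ : F) (a b c d : Fin 3 → F) :
    QuadraticMap.polar zornN (α, a, b, β) (γ, c, d, δ) =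
      α * δ + γ * β - a ⬝ᵥ d - c ⬝ᵥ b := by
  simp only [QuadraticMap.polar, Prod.mk_add_mk, zornN_mk, add_dotProduct, dotProduct_add]
  ring

lemma paraZornMul_mk (α β γ δ : F) (a b c d : Fin 3 → F) :
    paraZornMul (α, a, b, β) (γ, c, d, δ) =
      (β * δ + a ⬝ᵥ d, -(β • c) - γ • a - b ⨯₃ d, -(δ • b) - α • d + a ⨯₃ c,
        α * γ + b ⬝ᵥ c) := by
  simp only [paraZornMul, dot3_eq_dotProduct, cross3_eq_crossProduct]

lemma paraZornMul_add_left (ξ ξ' η : ZornSpace F) :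
    paraZornMul (ξ + ξ') η = paraZornMul ξ η + paraZornMul ξ' η := by
  obtain ⟨α, a, b, β⟩ := ξ
  obtain ⟨α', a', b', β'⟩ := ξ'
  obtain ⟨γ, c, d, δ⟩ := η
  simp only [Prod.mk_add_mk, paraZornMul_mk, add_dotProduct, map_add, LinearMap.add_apply,
    Prod.mk.injEq]
  refine ⟨by ring, by module, by module, by ring⟩

lemma paraZornMul_smul_left (k : F) (ξ η : ZornSpace F) :
    paraZornMul (k • ξ) η = k • paraZornMul ξ η := by
  obtain ⟨α, a, b, β⟩ := ξ
  obtain ⟨γ, c, d, δ⟩ := η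
  simp only [Prod.smul_mk, paraZornMul_mk, smul_dotProduct, map_smul, LinearMap.smul_apply,
    smul_eq_mul, Prod.mk.injEq]
  refine ⟨by ring, by module, by module, by ring⟩

lemma paraZornMul_add_right (ξ η η' : ZornSpace F) :
    paraZornMul ξ (η + η') = paraZornMul ξ η + paraZornMul ξ η' := by
  obtain ⟨α, a, b, β⟩ := ξ
  obtain ⟨γ, c, d, δ⟩ := η
  obtain ⟨γ', c', d', δ'⟩ := η'
  simp only [Prod.mk_add_mk, paraZornMul_mk, dotProduct_add, map_add, Prod.mk.injEq]
  refine ⟨by ring, by module, by module, by ring⟩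

lemma paraZornMul_smul_right (k : F) (ξ η : ZornSpace F) :
    paraZornMul ξ (k • η) = k • paraZornMul ξ η := by
  obtain ⟨α, a, b, β⟩ := ξ
  obtain ⟨γ, c, d, δ⟩ := η
  simp only [Prod.smul_mk, paraZornMul_mk, dotProduct_smul, map_smul, smul_eq_mul,
    Prod.mk.injEq]
  refine ⟨by ring, by module, by module, by ring⟩

lemma zornN_paraZornMul (ξ η : ZornSpace F) :
    zornN (paraZornMul ξ η) = zornN ξ * zornN η := by
  obtain ⟨α, a, b, β⟩ := ξ
  obtain ⟨γ, c, d, δ⟩ := η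
  have hb : b ⨯₃ d ⬝ᵥ b = 0 := by rw [dotProduct_comm, dot_self_cross]
  have hd : b ⨯₃ d ⬝ᵥ d = 0 := by rw [dotProduct_comm, dot_cross_self]
  simp only [paraZornMul_mk, zornN_mk, sub_dotProduct, dotProduct_sub, dotProduct_add,
    neg_dotProduct, dotProduct_neg, smul_dotProduct, dotProduct_smul, smul_eq_mul,
    dot_self_cross, dot_cross_self, hb, hd, cross_dot_cross, dotProduct_comm c b,
    dotProduct_comm b a, dotProduct_comm d c, dotProduct_comm d a]
  ring

lemma polar_zornN_paraZornMul (ξ η ζ : ZornSpace F) :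
    QuadraticMap.polar zornN (paraZornMul ξ η) ζ =
      QuadraticMap.polar zornN ξ (paraZornMul η ζ) := by
  obtain ⟨α, a, b, β⟩ := ξ
  obtain ⟨γ, c, d, δ⟩ := η
  obtain ⟨ε, e, f, φ⟩ := ζ
  have hbdf : b ⨯₃ d ⬝ᵥ f = d ⨯₃ f ⬝ᵥ b := by
    rw [dotProduct_comm, triple_product_permutation, dotProduct_comm]
  have heac : e ⬝ᵥ a ⨯₃ c = a ⬝ᵥ c ⨯₃ e := triple_product_permutation e a c
  simp only [paraZornMul_mk, polar_zornN_mk, sub_dotProduct, dotProduct_sub, dotProduct_add,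
    neg_dotProduct, dotProduct_neg, smul_dotProduct, dotProduct_smul, smul_eq_mul, hbdf, heac,
    dotProduct_comm c b, dotProduct_comm e d]
  ring

lemma eq_zero_of_polar_zornN_eq_zero (ξ : ZornSpace F)
    (h : ∀ η, QuadraticMap.polar zornN ξ η = 0) : ξ = 0 := by
  obtain ⟨α, a, b, β⟩ := ξ
  have hα : α = 0 := by simpa [polar_zornN_mk] using h (0, 0, 0, 1)
  have hβ : β = 0 := by simpa [polar_zornN_mk] using h (1, 0, 0, 0)
  have ha : a = 0 := dotProduct_eq_zero a fun d ↦ by simpa [polar_zornN_mk] using h (0, 0, d, 0)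
  have hb : b = 0 := dotProduct_eq_zero b fun c ↦ by
    simpa [polar_zornN_mk, dotProduct_comm c] using h (0, c, 0, 0)
  simp [hα, ha, hb, hβ]

lemma perm3_dotProduct_perm3 (a b : Fin 3 → F) : perm3 a ⬝ᵥ perm3 b = a ⬝ᵥ b := by
  simp only [← dot3_eq_dotProduct, dot3, perm3, Matrix.cons_val]
  ring

lemma perm3_crossProduct_perm3 (a b : Fin 3 → F) : perm3 a ⨯₃ perm3 b = perm3 (a ⨯₃ b) := by
  ext i; fin_cases i <;> rfl

lemma perm3_perm3_perm3 (a : Fin 3 → F) : perm3 (perm3 (perm3 a)) = a := by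
  ext i; fin_cases i <;> rfl

lemma perm3_add (a b : Fin 3 → F) : perm3 (a + b) = perm3 a + perm3 b := by
  ext i; fin_cases i <;> rfl

lemma perm3_smul (k : F) (a : Fin 3 → F) : perm3 (k • a) = k • perm3 a := by
  ext i; fin_cases i <;> rfl

lemma perm3_neg (a : Fin 3 → F) : perm3 (-a) = -perm3 a := by
  ext i; fin_cases i <;> rfl

lemma perm3_sub (a b : Fin 3 → F) : perm3 (a - b) = perm3 a - perm3 b := by
  ext i; fin_cases i <;> rfl

lemma zornPi_mk (α β : F) (a b : Fin 3 → F) :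
    zornPi (α, a, b, β) = (α, perm3 a, perm3 b, β) := rfl

lemma zornPi_add (ξ η : ZornSpace F) : zornPi (ξ + η) = zornPi ξ + zornPi η := by
  simp [zornPi, perm3_add]

lemma zornPi_smul (k : F) (ξ : ZornSpace F) : zornPi (k • ξ) = k • zornPi ξ := by
  simp [zornPi, perm3_smul]

lemma zornPi_zornPi_zornPi (ξ : ZornSpace F) : zornPi (zornPi (zornPi ξ)) = ξ := by
  simp [zornPi, perm3_perm3_perm3]

lemma zornPi_bijective : Function.Bijective (zornPi (F := F)) :=
  Function.bijective_iff_has_inverse.2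
    ⟨zornPi ∘ zornPi, zornPi_zornPi_zornPi, zornPi_zornPi_zornPi⟩

lemma zornN_zornPi (ξ : ZornSpace F) : zornN (zornPi ξ) = zornN ξ := by
  obtain ⟨α, a, b, β⟩ := ξ
  rw [zornPi_mk, zornN_mk, zornN_mk, perm3_dotProduct_perm3]

lemma zornPi_paraZornMul (ξ η : ZornSpace F) :
    zornPi (paraZornMul ξ η) = paraZornMul (zornPi ξ) (zornPi η) := by
  obtain ⟨α, a, b, β⟩ := ξ
  obtain ⟨γ, c, d, δ⟩ := η
  simp only [zornPi_mk, paraZornMul_mk, perm3_dotProduct_perm3, perm3_crossProduct_perm3,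
    perm3_add, perm3_sub, perm3_neg, perm3_smul]

end ParaZorn

/-- The para-Zorn product is a (bilinear) normalized symmetric composition for
the Zorn norm `n` (whose polar form is nondegenerate), and `π` is an isometric automorphism
of the para-Zorn composition with `π³ = Id`. -/
theorem statement15 (F : Type*) [Field F] :
    -- bilinearity of the para-Zorn product
    (∀ ξ ξ' η : ZornSpace F,
        paraZornMul (ξ + ξ') η = paraZornMul ξ η + paraZornMul ξ' η) ∧
    (∀ (c : F) (ξ η : ZornSpace F), paraZornMul (c • ξ) η = c • paraZornMul ξ η) ∧
    (∀ ξ η η' : ZornSpace F,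
        paraZornMul ξ (η + η') = paraZornMul ξ η + paraZornMul ξ η') ∧
    (∀ (c : F) (ξ η : ZornSpace F), paraZornMul ξ (c • η) = c • paraZornMul ξ η) ∧
    -- the polar form of `n` is nondegenerate
    (∀ ξ : ZornSpace F,
        (∀ η : ZornSpace F, QuadraticMap.polar (zornN (F := F)) ξ η = 0) → ξ = 0) ∧
    -- normalized symmetric composition
    (∀ ξ η : ZornSpace F, zornN (paraZornMul ξ η) = zornN ξ * zornN η) ∧
    (∀ ξ η ζ : ZornSpace F,
        QuadraticMap.polar (zornN (F := F)) (paraZornMul ξ η) ζ =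
          QuadraticMap.polar (zornN (F := F)) ξ (paraZornMul η ζ)) ∧
    -- `π` is a linear isometry, an automorphism of `∗`, and of order 3
    (∀ ξ η : ZornSpace F, zornPi (ξ + η) = zornPi ξ + zornPi η) ∧
    (∀ (c : F) (ξ : ZornSpace F), zornPi (c • ξ) = c • zornPi ξ) ∧
    Function.Bijective (zornPi (F := F)) ∧
    (∀ ξ : ZornSpace F, zornN (zornPi ξ) = zornN ξ) ∧
    (∀ ξ η : ZornSpace F, zornPi (paraZornMul ξ η) = paraZornMul (zornPi ξ) (zornPi η)) ∧
    (∀ ξ : ZornSpace F, zornPi (zornPi (zornPi ξ)) = ξ) :=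
  ⟨paraZornMul_add_left, paraZornMul_smul_left, paraZornMul_add_right,
    paraZornMul_smul_right, eq_zero_of_polar_zornN_eq_zero, zornN_paraZornMul,
    polar_zornN_paraZornMul, zornPi_add, zornPi_smul, zornPi_bijective, zornN_zornPi,
    zornPi_paraZornMul, zornPi_zornPi_zornPi⟩
end

section
/- Let F be a field with char F ≠ 3 containing a primitive cube root of unity ω (ω ≠ 1, ω³ = 1). Let A⁰ = {x ∈ M₃(F) : tr(x) = 0}, an 8-dimensional F-vector space, and define n : A⁰ → F by n(x) = −(1/3)·c₁(x), where c₁(x) is the coefficient of X in the characteristic polynomial det(X·1 − x), and define x ⋆ y = (1−ω)^{−1}(yx − ωxy) − (1/3)tr(xy)·1. Then x ⋆ y ∈ A⁰ for all x,y ∈ A⁰, the polar form of n is nondegenerate, ⋆ is a normalized symmetric composition on (A⁰,n) (i.e., n(x⋆y) = n(x)n(y) and b_n(x⋆y,z) = b_n(x,y⋆z) for all x,y,z ∈ A⁰), and the quadratic space (A⁰,n) is hyperbolic, i.e., there exists a 4-dimensional subspace of A⁰ on which n vanishes identically. -/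
/-!
Since `1 + ω + ω² = 0` we have `(1 - ω)⁻¹ = (2 + ω) / 3`, so `x ⋆ y = A + ω B` with
`A = (xy + 2yx - tr(xy)·1) / 3` and `B = (yx - xy) / 3`. Hence
`n(x ⋆ y) = n(A) + ω² n(B) + ω b_n(A, B)`, and the two `ω`-free polynomial identities
`b_n(A, B) = n(B)` and `n(A) - n(B) = n(x) n(y)` (for traceless `x, y`) give multiplicativity.
The polar form is `b_n(x, y) = (tr(xy) - tr x · tr y) / 3`, so associativity of `b_n` is the
cyclicity of the trace and nondegeneracy is that of the trace form on `sl₃`.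
An isotropic subspace of dimension 4 is spanned by `diag(1, ω, ω²)` and the three strictly
upper triangular matrix units.
-/

/-- The Okubo norm `n(x) = −(1/3)·c₁(x)`, where `c₁(x)` is the coefficient of `X` in the
characteristic polynomial of the 3×3 matrix `x`. -/
noncomputable def okuboN {F : Type*} [Field F] (x : Matrix (Fin 3) (Fin 3) F) : F :=
  -(3 : F)⁻¹ * (Matrix.charpoly x).coeff 1

/-- The Okubo product `x ⋆ y = (1−ω)⁻¹(yx − ωxy) − (1/3)tr(xy)·1`. -/
noncomputable def okuboMul {F : Type*} [Field F] (ω : F)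
    (x y : Matrix (Fin 3) (Fin 3) F) : Matrix (Fin 3) (Fin 3) F :=
  (1 - ω)⁻¹ • (y * x - ω • (x * y)) - ((3 : F)⁻¹ * Matrix.trace (x * y)) • 1

open Matrix

section TraceForm

variable {n K : Type*} [Fintype n] [Field K]

theorem Matrix.finrank_ker_traceLinearMap [Nonempty n] :
    Module.finrank K (LinearMap.ker (traceLinearMap n K K)) = Fintype.card n ^ 2 - 1 := by
  have hrange : LinearMap.range (traceLinearMap n K K) = ⊤ :=
    LinearMap.range_eq_top.2 trace_surjective
  have h := LinearMap.finrank_range_add_finrank_ker (traceLinearMap n K K)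
  rw [hrange, finrank_top, Module.finrank_self, Module.finrank_matrix, Module.finrank_self] at h
  rw [sq]
  omega

theorem Matrix.eq_zero_of_trace_mul_eq_zero [DecidableEq n] (hn : (Fintype.card n : K) ≠ 0)
    {x : Matrix n n K} (hx : trace x = 0) (h : ∀ y, trace y = 0 → trace (x * y) = 0) :
    x = 0 := by
  have hoff : ∀ i j, i ≠ j → x i j = 0 := fun i j hij => by
    simpa [trace_mul_single] using h (single j i 1) (trace_single_eq_of_ne _ _ _ hij.symm)
  have hdiag : ∀ i j, x i i = x j j := fun i j => by
    have := h (single i i 1 - single j j 1) (by simp)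
    rwa [Matrix.mul_sub, trace_sub, trace_mul_single, trace_mul_single, sub_eq_zero,
      MulOpposite.op_one, one_smul, one_smul] at this
  have hzero : ∀ i, x i i = 0 := fun i => by
    have : (Fintype.card n : K) * x i i = 0 := by
      rw [← hx, trace, ← Finset.card_univ, ← nsmul_eq_mul, ← Finset.sum_const]
      exact Finset.sum_congr rfl fun j _ => (hdiag j i).symm
    exact (mul_eq_zero.1 this).resolve_left hn
  ext i j
  rcases eq_or_ne i j with rfl | hij
  · exact hzero i
  · exact hoff i j hij

end TraceForm

theorem sq_add_self_add_one_eq_zero {F : Type*} [Field F] {ω : F} (hω1 : ω ≠ 1)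
    (hω3 : ω ^ 3 = 1) : ω ^ 2 + ω + 1 = 0 := by
  have : (ω - 1) * (ω ^ 2 + ω + 1) = 0 := by linear_combination hω3
  exact (mul_eq_zero.1 this).resolve_left (sub_ne_zero.2 hω1)

section Okubo

variable {F : Type*} [Field F]

open Polynomial in
theorem Matrix.charpoly_fin_three (x : Matrix (Fin 3) (Fin 3) F) :
    x.charpoly = X ^ 3 - C (trace x) * X ^ 2
      + C (x 0 0 * x 1 1 - x 0 1 * x 1 0 + x 0 0 * x 2 2 - x 0 2 * x 2 0
        + x 1 1 * x 2 2 - x 1 2 * x 2 1) * X - C (det x) := by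
  rw [charpoly, det_fin_three, det_fin_three, trace_fin_three]
  simp
  ring

open Polynomial in
theorem okuboN_eq (x : Matrix (Fin 3) (Fin 3) F) :
    okuboN x = -(3 : F)⁻¹ * (x 0 0 * x 1 1 - x 0 1 * x 1 0 + x 0 0 * x 2 2 - x 0 2 * x 2 0
      + x 1 1 * x 2 2 - x 1 2 * x 2 1) := by
  simp [okuboN, charpoly_fin_three, coeff_C, coeff_X_pow]

theorem polar_okuboN (x y : Matrix (Fin 3) (Fin 3) F) :
    QuadraticMap.polar okuboN x y = (3 : F)⁻¹ * (trace (x * y) - trace x * trace y) := by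
  simp only [QuadraticMap.polar, okuboN_eq, trace_fin_three, mul_apply, Fin.sum_univ_three,
    Matrix.add_apply]
  ring

theorem okuboN_add_smul (x y : Matrix (Fin 3) (Fin 3) F) (c : F) :
    okuboN (x + c • y) = okuboN x + c ^ 2 * okuboN y + c * QuadraticMap.polar okuboN x y := by
  simp only [QuadraticMap.polar, okuboN_eq, Matrix.add_apply, Matrix.smul_apply, smul_eq_mul]
  ring

theorem trace_okuboMul {ω : F} (h3 : (3 : F) ≠ 0) (hω1 : ω ≠ 1)
    (x y : Matrix (Fin 3) (Fin 3) F) :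
    trace (okuboMul ω x y) = 0 := by
  have h1ω : (1 : F) - ω ≠ 0 := sub_ne_zero.2 hω1.symm
  rw [okuboMul, trace_sub, trace_smul, trace_smul, trace_sub, trace_smul, trace_mul_comm y x,
    trace_one, Fintype.card_fin, smul_eq_mul, smul_eq_mul, smul_eq_mul, Nat.cast_ofNat]
  field_simp
  ring

theorem trace_okuboMul_mul (ω : F) {x z : Matrix (Fin 3) (Fin 3) F} (hx : trace x = 0)
    (hz : trace z = 0) (y : Matrix (Fin 3) (Fin 3) F) :
    trace (okuboMul ω x y * z) = trace (x * okuboMul ω y z) := by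
  have hcycle : trace (y * (x * z)) = trace (x * (z * y)) := by
    rw [trace_mul_comm, Matrix.mul_assoc]
  simp only [okuboMul, Matrix.sub_mul, Matrix.mul_sub, Matrix.smul_mul, Matrix.mul_smul,
    trace_sub, trace_smul, Matrix.one_mul, Matrix.mul_one, hx, hz, Matrix.mul_assoc, smul_zero,
    hcycle]

theorem polar_okuboN_okuboMul_assoc (ω : F) {x z : Matrix (Fin 3) (Fin 3) F} (hx : trace x = 0)
    (hz : trace z = 0) (y : Matrix (Fin 3) (Fin 3) F) :
    QuadraticMap.polar okuboN (okuboMul ω x y) z =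
      QuadraticMap.polar okuboN x (okuboMul ω y z) := by
  rw [polar_okuboN, polar_okuboN, trace_okuboMul_mul ω hx hz, hx, hz, mul_zero, zero_mul]

def okuboMulFst (x y : Matrix (Fin 3) (Fin 3) F) : Matrix (Fin 3) (Fin 3) F :=
  (3 : F)⁻¹ • (x * y + (2 : F) • (y * x) - trace (x * y) • 1)

def okuboMulSnd (x y : Matrix (Fin 3) (Fin 3) F) : Matrix (Fin 3) (Fin 3) F :=
  (3 : F)⁻¹ • (y * x - x * y)

theorem okuboMul_eq {ω : F} (h3 : (3 : F) ≠ 0) (hω : ω ^ 2 + ω + 1 = 0)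
    (x y : Matrix (Fin 3) (Fin 3) F) :
    okuboMul ω x y = okuboMulFst x y + ω • okuboMulSnd x y := by
  have hinv : (1 - ω)⁻¹ = (3 : F)⁻¹ * (2 + ω) := by
    apply inv_eq_of_mul_eq_one_right
    field_simp
    linear_combination -hω
  rw [okuboMul, okuboMulFst, okuboMulSnd, hinv]
  match_scalars <;> field_simp
  linear_combination -hω

theorem polar_okuboMulFst_okuboMulSnd (x y : Matrix (Fin 3) (Fin 3) F) :
    QuadraticMap.polar okuboN (okuboMulFst x y) (okuboMulSnd x y) = okuboN (okuboMulSnd x y) := by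
  simp only [okuboMulFst, trace_fin_three, Fin.isValue, mul_apply, Fin.sum_univ_three, okuboMulSnd,
    polar_okuboN, Algebra.mul_smul_comm, Algebra.smul_mul_assoc, trace_smul, Matrix.sub_apply,
    Matrix.add_apply, Matrix.smul_apply, smul_eq_mul, one_apply, mul_ite, mul_one, mul_zero,
    ↓reduceIte, zero_ne_one, sub_zero, Fin.reduceEq, one_ne_zero, trace_sub, trace_add, trace_one,
    Fintype.card_fin, Nat.cast_ofNat, okuboN_eq, neg_mul]
  ring

theorem okuboN_okuboMulFst_sub_okuboN_okuboMulSnd (h3 : (3 : F) ≠ 0)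
    {x y : Matrix (Fin 3) (Fin 3) F} (hx : trace x = 0) (hy : trace y = 0) :
    okuboN (okuboMulFst x y) - okuboN (okuboMulSnd x y) = okuboN x * okuboN y := by
  rw [trace_fin_three] at hx hy
  have hx22 : x 2 2 = -x 0 0 - x 1 1 := by linear_combination hx
  have hy22 : y 2 2 = -y 0 0 - y 1 1 := by linear_combination hy
  simp only [okuboMulFst, trace_fin_three, Fin.isValue, mul_apply, Fin.sum_univ_three, hx22, hy22,
    okuboN_eq, Matrix.smul_apply, Matrix.sub_apply, Matrix.add_apply, smul_eq_mul, one_apply,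
    ↓reduceIte, mul_one, zero_ne_one, mul_zero, sub_zero, one_ne_zero, Fin.reduceEq, neg_mul,
    okuboMulSnd, sub_neg_eq_add, mul_neg, neg_neg]
  field_simp
  ring

theorem okuboN_okuboMul {ω : F} (h3 : (3 : F) ≠ 0) (hω : ω ^ 2 + ω + 1 = 0)
    {x y : Matrix (Fin 3) (Fin 3) F} (hx : trace x = 0) (hy : trace y = 0) :
    okuboN (okuboMul ω x y) = okuboN x * okuboN y := by
  rw [okuboMul_eq h3 hω, okuboN_add_smul, polar_okuboMulFst_okuboMulSnd,
    ← okuboN_okuboMulFst_sub_okuboN_okuboMulSnd h3 hx hy]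
  linear_combination okuboN (okuboMulSnd x y) * hω

end Okubo

theorem exists_okuboN_isotropic_subspace {F : Type*} [Field F] {ω : F}
    (hω : ω ^ 2 + ω + 1 = 0) :
    ∃ W : Submodule F (Matrix (Fin 3) (Fin 3) F),
      (∀ w ∈ W, trace w = 0) ∧ Module.finrank F W = 4 ∧ ∀ w ∈ W, okuboN w = 0 := by
  set v : Fin 4 → Matrix (Fin 3) (Fin 3) F :=
    ![!![1, 0, 0; 0, ω, 0; 0, 0, ω ^ 2], !![0, 1, 0; 0, 0, 0; 0, 0, 0],
      !![0, 0, 1; 0, 0, 0; 0, 0, 0], !![0, 0, 0; 0, 0, 1; 0, 0, 0]] with hv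
  have hli : LinearIndependent F v := by
    refine Fintype.linearIndependent_iff.2 fun c hc i => ?_
    have hentry := fun i j => congrFun (congrFun hc i) j
    fin_cases i
    · simpa [hv, Fin.sum_univ_four] using hentry 0 0
    · simpa [hv, Fin.sum_univ_four] using hentry 0 1
    · simpa [hv, Fin.sum_univ_four] using hentry 0 2
    · simpa [hv, Fin.sum_univ_four] using hentry 1 2
  refine ⟨Submodule.span F (Set.range v), fun w hw => ?_, ?_, fun w hw => ?_⟩
  · obtain ⟨c, rfl⟩ := (Submodule.mem_span_range_iff_exists_fun F).1 hw
    simp only [hv, Fin.sum_univ_four, Fin.isValue, cons_val_zero, smul_of, smul_cons, smul_eq_mul,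
      mul_one, mul_zero, smul_empty, cons_val_one, of_add_of, add_cons, head_cons, add_zero,
      tail_cons, zero_add, empty_add_empty, cons_val, trace_fin_three, of_apply, cons_val',
      cons_val_fin_one]
    linear_combination c 0 * hω
  · rw [finrank_span_eq_card hli, Fintype.card_fin]
  · obtain ⟨c, rfl⟩ := (Submodule.mem_span_range_iff_exists_fun F).1 hw
    simp only [hv, Fin.sum_univ_four, Fin.isValue, cons_val_zero, smul_of, smul_cons, smul_eq_mul,
      mul_one, mul_zero, smul_empty, cons_val_one, of_add_of, add_cons, head_cons, add_zero,
      tail_cons, zero_add, empty_add_empty, cons_val, okuboN_eq, of_apply, cons_val',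
      cons_val_fin_one]
    linear_combination -(3 : F)⁻¹ * c 0 ^ 2 * ω * hω

/-- Over a field of characteristic ≠ 3 containing a primitive cube root of
unity `ω`, the trace-zero matrices `A⁰ ⊂ M₃(F)` form an 8-dimensional space on which the
Okubo product and norm yield a normalized symmetric composition whose underlying quadratic
space is hyperbolic. -/
theorem statement17 (F : Type*) [Field F] (h3 : (3 : F) ≠ 0)
    (ω : F) (hω1 : ω ≠ 1) (hω3 : ω ^ 3 = 1) :
    -- `A⁰` is 8-dimensional
    Module.finrank F ↥(LinearMap.ker (Matrix.traceLinearMap (Fin 3) F F)) = 8 ∧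
    -- `⋆` preserves `A⁰`
    (∀ x y : Matrix (Fin 3) (Fin 3) F, Matrix.trace x = 0 → Matrix.trace y = 0 →
      Matrix.trace (okuboMul ω x y) = 0) ∧
    -- the polar form of `n` is nondegenerate on `A⁰`
    (∀ x : Matrix (Fin 3) (Fin 3) F, Matrix.trace x = 0 →
      (∀ y : Matrix (Fin 3) (Fin 3) F, Matrix.trace y = 0 →
        QuadraticMap.polar (okuboN (F := F)) x y = 0) → x = 0) ∧
    -- `⋆` is a normalized symmetric composition on `(A⁰, n)`
    (∀ x y : Matrix (Fin 3) (Fin 3) F, Matrix.trace x = 0 → Matrix.trace y = 0 →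
      okuboN (okuboMul ω x y) = okuboN x * okuboN y) ∧
    (∀ x y z : Matrix (Fin 3) (Fin 3) F,
      Matrix.trace x = 0 → Matrix.trace y = 0 → Matrix.trace z = 0 →
      QuadraticMap.polar (okuboN (F := F)) (okuboMul ω x y) z =
        QuadraticMap.polar (okuboN (F := F)) x (okuboMul ω y z)) ∧
    -- `(A⁰, n)` is hyperbolic: `n` vanishes on a 4-dimensional subspace of `A⁰`
    (∃ W : Submodule F (Matrix (Fin 3) (Fin 3) F),
      (∀ w ∈ W, Matrix.trace w = 0) ∧ Module.finrank F ↥W = 4 ∧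
      ∀ w ∈ W, okuboN w = 0) := by
  have hω : ω ^ 2 + ω + 1 = 0 := sq_add_self_add_one_eq_zero hω1 hω3
  refine ⟨?_, fun x y _ _ => trace_okuboMul h3 hω1 x y, ?_,
    fun x y hx hy => okuboN_okuboMul h3 hω hx hy,
    fun x y z hx _ hz => polar_okuboN_okuboMul_assoc ω hx hz y,
    exists_okuboN_isotropic_subspace hω⟩
  · simpa using finrank_ker_traceLinearMap (n := Fin 3) (K := F)
  · refine fun x hx hpolar => eq_zero_of_trace_mul_eq_zero (by simpa using h3) hx fun y hy => ?_
    have h := hpolar y hy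
    rw [polar_okuboN, hy, mul_zero, sub_zero] at h
    exact (mul_eq_zero.1 h).resolve_left (inv_ne_zero h3)
end
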